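/- Let ω be an admissible penalty. Let Φ_1, …, Φ_N be real C×P matrices and y_1, …, y_N ∈ ℝ^C such that the linear system Φ_i β = y_i (for all i) has a solution, let β̂ ∈ ℝ^P be a solution of minimum Euclidean norm, and assume β̂ ≠ 0. Suppose s ≥ 1 satisfies ω(s) + ‖β̂‖₂²/s² = inf_{z ≥ 1} (ω(z) + ‖β̂‖₂²/z²). Then the matrix M̂ = I_P + (s − 1)‖β̂‖₂^{-2} β̂ β̂ᵀ and the vector θ̂ = s^{-1} β̂ satisfy Φ_i M̂ θ̂ = y_i for all i, Ω_ω(M̂) + ‖θ̂‖₂² = ω̃(‖β̂‖₂), and this value equals the infimum of Ω_ω(M) + ‖θ‖₂² over all P×P matrices M and θ ∈ ℝ^P with Φ_i M θ = y_i for all i; that is, (M̂, θ̂) is a minimizer of the relaxed feature-learning problem. -/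

import Mathlib

open Matrix Set

noncomputable section

/-- An admissible penalty: nonnegative, minimized at `ω 1 = 0`, strictly decreasing on `(0,1]`
and strictly increasing on `[1,∞)`. -/
def Admissible (ω : ℝ → ℝ) : Prop :=
  (∀ x, 0 ≤ ω x) ∧ ω 1 = 0 ∧ StrictAntiOn ω (Set.Ioc 0 1) ∧ StrictMonoOn ω (Set.Ici 1)

/-- The scalar effective penalty `ω̃ v = inf_{z ≥ 1} (ω z + v² / z²)`. -/
def effPenalty (ω : ℝ → ℝ) (v : ℝ) : ℝ :=
  sInf ((fun z => ω z + v ^ 2 / z ^ 2) '' Set.Ici (1 : ℝ))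

/-- The joint penalty `(ω₁ ⊕ ω₂) v = inf_{1 ≤ z ≤ v} (ω₁ z + ω₂ (v / z))`. -/
def jointPenalty (ω₁ ω₂ : ℝ → ℝ) (v : ℝ) : ℝ :=
  sInf ((fun z => ω₁ z + ω₂ (v / z)) '' Set.Icc (1 : ℝ) v)

/-- The (unordered) singular values of a real `P × Q` matrix: square roots of the
eigenvalues of `Xᴴ X`. -/
def svals {P Q : ℕ} (X : Matrix (Fin P) (Fin Q) ℝ) (j : Fin Q) : ℝ :=
  Real.sqrt ((Matrix.isHermitian_conjTranspose_mul_self X).eigenvalues j)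

/-- Singular values sorted in decreasing order: `svalsDesc X j` is the `j`-th largest
singular value of `X`. -/
def svalsDesc {P Q : ℕ} (X : Matrix (Fin P) (Fin Q) ℝ) (j : Fin Q) : ℝ :=
  svals X (Tuple.sort (fun i => - svals X i) j)

/-- The spectral penalty `Ω_ω M = Σ_j ω (σ_j M)`. -/
def specPenalty (ω : ℝ → ℝ) {P : ℕ} (M : Matrix (Fin P) (Fin P) ℝ) : ℝ :=
  ∑ j, ω (svals M j)

/-- Frobenius norm squared. -/
def frobSq {P Q : ℕ} (X : Matrix (Fin P) (Fin Q) ℝ) : ℝ :=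
  ∑ i, ∑ j, X i j ^ 2

/-- Euclidean norm of a vector. -/
def enorm2 {P : ℕ} (v : Fin P → ℝ) : ℝ :=
  Real.sqrt (∑ j, v j ^ 2)

/-- The induced effective spectral penalty `Ω̃_g B = Σ_{j=1}^{min(P,Q)} g̃(σ_j B)`. -/
def effSpec (g : ℝ → ℝ) {P Q : ℕ} (B : Matrix (Fin P) (Fin Q) ℝ) : ℝ :=
  ∑ j : Fin (min P Q), effPenalty g (svalsDesc B (Fin.castLE (min_le_right P Q) j))

/-!
If `(M, θ)` is feasible then `M θ` solves the linear system, so `‖β̂‖ ≤ ‖M θ‖ ≤ σ ‖θ‖` for the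
largest singular value `σ` of `M`. Since `ω̃` is monotone and `ω̃ (σ t) ≤ ω σ + t²` (take `z = σ`
if `σ ≥ 1` and `z = 1` otherwise), `ω̃ ‖β̂‖ ≤ ω σ + ‖θ‖² ≤ Ω_ω M + ‖θ‖²`.

For `M̂ = 1 + c β̂ β̂ᵀ` one has `M̂ᵀ M̂ = 1 + d β̂ β̂ᵀ` for some `d`, and each eigenvalue is `1` or
`(1 + c ‖β̂‖²)² = s²`; its trace `P + s² - 1` forces `s²` to occur exactly once when `s > 1`.
Hence `Ω_ω M̂ = ω s`, and with `M̂ θ̂ = β̂`, `‖θ̂‖² = ‖β̂‖² / s²` the value is `ω̃ ‖β̂‖`.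
-/

namespace Matrix

variable {n : Type*} [Fintype n]

theorem dotProduct_mulVec_self_eq (M : Matrix n n ℝ) (x : n → ℝ) :
    (M *ᵥ x) ⬝ᵥ (M *ᵥ x) = x ⬝ᵥ (Mᴴ * M) *ᵥ x := by
  rw [← mulVec_mulVec, conjTranspose_eq_transpose_of_trivial, mulVec_transpose,
    dotProduct_comm x, ← dotProduct_mulVec]

variable [DecidableEq n]

open MatrixOrder in
theorem IsHermitian.dotProduct_mulVec_le {A : Matrix n n ℝ} (hA : A.IsHermitian) {c : ℝ}
    (hc : ∀ i, hA.eigenvalues i ≤ c) (x : n → ℝ) : x ⬝ᵥ A *ᵥ x ≤ c * (x ⬝ᵥ x) := by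
  have hle : A ≤ algebraMap ℝ (Matrix n n ℝ) c := by
    refine le_algebraMap_of_spectrum_le (fun r hr => ?_) hA.isSelfAdjoint
    obtain ⟨i, rfl⟩ := hA.spectrum_real_eq_range_eigenvalues ▸ hr
    exact hc i
  have := (le_iff.mp hle).dotProduct_mulVec_nonneg x
  rw [Algebra.algebraMap_eq_smul_one, sub_mulVec, smul_mulVec, one_mulVec, dotProduct_sub,
    dotProduct_smul, smul_eq_mul, star_trivial] at this
  linarith

theorem exists_dotProduct_mulVec_self_le [Nonempty n] (M : Matrix n n ℝ) (x : n → ℝ) :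
    ∃ i, (M *ᵥ x) ⬝ᵥ (M *ᵥ x) ≤
      (isHermitian_conjTranspose_mul_self M).eigenvalues i * (x ⬝ᵥ x) := by
  obtain ⟨i, hi⟩ := Finite.exists_max (isHermitian_conjTranspose_mul_self M).eigenvalues
  exact ⟨i, dotProduct_mulVec_self_eq M x ▸
    (isHermitian_conjTranspose_mul_self M).dotProduct_mulVec_le hi x⟩

theorem one_add_smul_vecMulVec_mulVec {K : Type*} [CommRing K] (d : K) (b u : n → K) :
    (1 + d • vecMulVec b b) *ᵥ u = u + (d * (b ⬝ᵥ u)) • b := by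
  rw [add_mulVec, one_mulVec, smul_mulVec, vecMulVec_mulVec, op_smul_eq_smul, smul_smul]

theorem conjTranspose_mul_self_one_add_smul_vecMulVec (c : ℝ) (b : n → ℝ) :
    (1 + c • vecMulVec b b)ᴴ * (1 + c • vecMulVec b b) =
      1 + (2 * c + c ^ 2 * (b ⬝ᵥ b)) • vecMulVec b b := by
  rw [conjTranspose_eq_transpose_of_trivial, transpose_add, transpose_one, transpose_smul,
    transpose_vecMulVec, add_mul, mul_add, mul_add, smul_mul_smul, vecMulVec_mul_vecMulVec,
    vecMulVec_smul]
  simp only [one_mul, mul_one]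
  module

theorem eq_one_or_eq_of_one_add_smul_vecMulVec_mulVec {K : Type*} [Field K] {d μ : K}
    {b u : n → K} (hu : u ≠ 0) (h : (1 + d • vecMulVec b b) *ᵥ u = μ • u) :
    μ = 1 ∨ μ = 1 + d * (b ⬝ᵥ b) := by
  rw [one_add_smul_vecMulVec_mulVec] at h
  by_cases hbu : b ⬝ᵥ u = 0
  · left
    rw [hbu, mul_zero, zero_smul, add_zero] at h
    obtain ⟨i, hi⟩ := Function.ne_iff.mp hu
    have hi' := congrFun h i
    simp only [Pi.smul_apply, smul_eq_mul] at hi'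
    exact (mul_eq_right₀ hi).mp hi'.symm
  · right
    have hb := congrArg (b ⬝ᵥ ·) h
    simp only [dotProduct_add, dotProduct_smul, smul_eq_mul] at hb
    apply mul_right_cancel₀ hbu
    linear_combination -hb

theorem IsHermitian.eigenvalues_eq_one_or_eq {A : Matrix n n ℝ} (hA : A.IsHermitian) {d : ℝ}
    {b : n → ℝ} (hAeq : A = 1 + d • vecMulVec b b) (j : n) :
    hA.eigenvalues j = 1 ∨ hA.eigenvalues j = 1 + d * (b ⬝ᵥ b) :=
  eq_one_or_eq_of_one_add_smul_vecMulVec_mulVec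
    ((WithLp.ofLp_eq_zero 2).ne.2 <| hA.eigenvectorBasis.orthonormal.ne_zero j)
    (hAeq ▸ hA.mulVec_eigenvectorBasis j)

end Matrix

theorem Finset.sum_comp_of_forall_eq_one_or_eq {ι : Type*} [Fintype ι] {f : ι → ℝ} {a : ℝ}
    (hf : ∀ i, f i = 1 ∨ f i = a) (hsum : ∑ i, f i = Fintype.card ι + (a - 1))
    {g : ℝ → ℝ} (hg : g 1 = 0) : ∑ i, g (f i) = g a := by
  rcases eq_or_ne a 1 with rfl | ha
  · simp [fun i => (hf i).elim id id, hg]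
  -- On `{1, a}`, `g` agrees with the affine function through `(1, 0)` and `(a, g a)`.
  have hinterp : ∀ i, g (f i) * (a - 1) = g a * (f i - 1) := fun i => by
    rcases hf i with h | h <;> simp [h, hg]
  have hsum' : (∑ i, g (f i)) * (a - 1) = g a * (a - 1) := by
    rw [Finset.sum_mul, Finset.sum_congr rfl fun i _ => hinterp i, ← Finset.mul_sum,
      Finset.sum_sub_distrib, hsum]
    simp
  exact mul_right_cancel₀ (sub_ne_zero.mpr ha) hsum'

section EffectivePenalty

variable {ω : ℝ → ℝ}

theorem effPenalty_le (hω0 : ∀ x, 0 ≤ ω x) (v : ℝ) {z : ℝ} (hz : 1 ≤ z) :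
    effPenalty ω v ≤ ω z + v ^ 2 / z ^ 2 := by
  refine csInf_le ⟨0, ?_⟩ ⟨z, hz, rfl⟩
  rintro _ ⟨w, -, rfl⟩
  exact add_nonneg (hω0 w) (by positivity)

theorem effPenalty_mono (hω0 : ∀ x, 0 ≤ ω x) {u v : ℝ} (hu : 0 ≤ u) (huv : u ≤ v) :
    effPenalty ω u ≤ effPenalty ω v := by
  refine le_csInf ⟨_, 1, Set.self_mem_Ici, rfl⟩ ?_
  rintro _ ⟨z, hz, rfl⟩
  calc effPenalty ω u ≤ ω z + u ^ 2 / z ^ 2 := effPenalty_le hω0 u hz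
    _ ≤ ω z + v ^ 2 / z ^ 2 := by gcongr

theorem effPenalty_mul_le (hω0 : ∀ x, 0 ≤ ω x) (hω1 : ω 1 = 0) {σ : ℝ} (hσ : 0 ≤ σ) (t : ℝ) :
    effPenalty ω (σ * t) ≤ ω σ + t ^ 2 := by
  rcases le_or_gt 1 σ with h | h
  · calc effPenalty ω (σ * t) ≤ ω σ + (σ * t) ^ 2 / σ ^ 2 := effPenalty_le hω0 _ h
      _ = ω σ + t ^ 2 := by field_simp
  · calc effPenalty ω (σ * t) ≤ ω 1 + (σ * t) ^ 2 / 1 ^ 2 := effPenalty_le hω0 _ le_rfl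
      _ = σ ^ 2 * t ^ 2 := by rw [hω1]; ring
      _ ≤ 1 * t ^ 2 := by gcongr; nlinarith
      _ ≤ ω σ + t ^ 2 := by linarith [hω0 σ]

end EffectivePenalty

section SpectralPenalty

variable {P : ℕ}

theorem enorm2_nonneg (v : Fin P → ℝ) : 0 ≤ enorm2 v := Real.sqrt_nonneg _

theorem enorm2_sq (v : Fin P → ℝ) : enorm2 v ^ 2 = v ⬝ᵥ v := by
  rw [enorm2, Real.sq_sqrt (by positivity)]
  simp only [dotProduct, sq]

theorem enorm2_mulVec_le_svals_mul [Nonempty (Fin P)] (M : Matrix (Fin P) (Fin P) ℝ)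
    (θ : Fin P → ℝ) : ∃ j, enorm2 (M *ᵥ θ) ≤ svals M j * enorm2 θ := by
  obtain ⟨j, hj⟩ := exists_dotProduct_mulVec_self_le M θ
  refine ⟨j, (pow_le_pow_iff_left₀ (enorm2_nonneg _)
    (mul_nonneg (Real.sqrt_nonneg _) (enorm2_nonneg _)) two_ne_zero).mp ?_⟩
  rwa [mul_pow, enorm2_sq, enorm2_sq, Real.sq_sqrt (eigenvalues_conjTranspose_mul_self_nonneg M j)]

theorem effPenalty_le_specPenalty_add_sq {ω : ℝ → ℝ} (hω0 : ∀ x, 0 ≤ ω x) (hω1 : ω 1 = 0)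
    [Nonempty (Fin P)] (M : Matrix (Fin P) (Fin P) ℝ) (θ : Fin P → ℝ) {b : ℝ} (hb0 : 0 ≤ b)
    (hb : b ≤ enorm2 (M *ᵥ θ)) : effPenalty ω b ≤ specPenalty ω M + enorm2 θ ^ 2 := by
  obtain ⟨j, hj⟩ := enorm2_mulVec_le_svals_mul M θ
  calc effPenalty ω b ≤ effPenalty ω (svals M j * enorm2 θ) :=
        effPenalty_mono hω0 hb0 (hb.trans hj)
    _ ≤ ω (svals M j) + enorm2 θ ^ 2 := effPenalty_mul_le hω0 hω1 (Real.sqrt_nonneg _) _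
    _ ≤ specPenalty ω M + enorm2 θ ^ 2 := by
        gcongr
        exact Finset.single_le_sum (fun i _ => hω0 _) (Finset.mem_univ j)

theorem specPenalty_one_add_smul_vecMulVec {ω : ℝ → ℝ} (hω1 : ω 1 = 0) (c : ℝ)
    (b : Fin P → ℝ) :
    specPenalty ω (1 + c • vecMulVec b b) = ω |1 + c * (b ⬝ᵥ b)| := by
  set d := 2 * c + c ^ 2 * (b ⬝ᵥ b)
  have hd : 1 + d * (b ⬝ᵥ b) = (1 + c * (b ⬝ᵥ b)) ^ 2 := by ring
  have hA := isHermitian_conjTranspose_mul_self (1 + c • vecMulVec b b)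
  have hAeq := conjTranspose_mul_self_one_add_smul_vecMulVec c b
  have htrace : ∑ i, hA.eigenvalues i = Fintype.card (Fin P) + d * (b ⬝ᵥ b) := by
    have htrace' : trace (1 + d • vecMulVec b b) = Fintype.card (Fin P) + d * (b ⬝ᵥ b) := by
      simp
    rw [← htrace', ← hAeq, hA.trace_eq_sum_eigenvalues]
    rfl
  have hsum := Finset.sum_comp_of_forall_eq_one_or_eq (g := fun x => ω (Real.sqrt x))
    (fun j => hd ▸ hA.eigenvalues_eq_one_or_eq hAeq j)
    (by rw [htrace, ← hd]; ring) (by simp [hω1])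
  rw [specPenalty]
  simpa only [svals, Real.sqrt_sq_eq_abs] using hsum

end SpectralPenalty

/-- Theorem 1 of the paper. The explicit rank-one-perturbation solution of the
structureless adaptive feature learning problem. -/
theorem structureless_solution
    {N C P : ℕ} (ω : ℝ → ℝ) (hω : Admissible ω)
    (Φ : Fin N → Matrix (Fin C) (Fin P) ℝ) (y : Fin N → Fin C → ℝ)
    (βh : Fin P → ℝ)
    (hsol : ∀ i, (Φ i) *ᵥ βh = y i)
    (hmin : ∀ β : Fin P → ℝ, (∀ i, (Φ i) *ᵥ β = y i) → enorm2 βh ≤ enorm2 β)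
    (hβ : βh ≠ 0)
    (s : ℝ) (hs : 1 ≤ s)
    (hsopt : ω s + (enorm2 βh) ^ 2 / s ^ 2 = effPenalty ω (enorm2 βh)) :
    let M := (1 : Matrix (Fin P) (Fin P) ℝ) +
      ((s - 1) / (enorm2 βh) ^ 2) • Matrix.vecMulVec βh βh
    let θ := s⁻¹ • βh
    (∀ i, (Φ i) *ᵥ (M *ᵥ θ) = y i) ∧
    specPenalty ω M + (enorm2 θ) ^ 2 = effPenalty ω (enorm2 βh) ∧
    effPenalty ω (enorm2 βh) =
      sInf {v : ℝ | ∃ (M' : Matrix (Fin P) (Fin P) ℝ) (θ' : Fin P → ℝ),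
        (∀ i, (Φ i) *ᵥ (M' *ᵥ θ') = y i) ∧ v = specPenalty ω M' + (enorm2 θ') ^ 2} := by
  intro M θ
  obtain ⟨hω0, hω1, -⟩ := hω
  obtain ⟨i₀, -⟩ := Function.ne_iff.mp hβ
  have : Nonempty (Fin P) := ⟨i₀⟩
  have hs0 : s ≠ 0 := (zero_lt_one.trans_le hs).ne'
  have hsB : 1 + (s - 1) / enorm2 βh ^ 2 * (βh ⬝ᵥ βh) = s := by
    rw [enorm2_sq]
    field_simp [dotProduct_self_eq_zero.not.mpr hβ]
    ring
  have hMθ : M *ᵥ θ = βh :=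
    calc M *ᵥ θ = s⁻¹ • (1 + (s - 1) / enorm2 βh ^ 2 * (βh ⬝ᵥ βh)) • βh := by
          rw [mulVec_smul, one_add_smul_vecMulVec_mulVec, add_smul, one_smul]
      _ = βh := by rw [hsB, smul_smul, inv_mul_cancel₀ hs0, one_smul]
  have hfeas : ∀ i, Φ i *ᵥ (M *ᵥ θ) = y i := fun i => hMθ ▸ hsol i
  have hval : specPenalty ω M + enorm2 θ ^ 2 = effPenalty ω (enorm2 βh) := by
    rw [← hsopt, specPenalty_one_add_smul_vecMulVec hω1, hsB, abs_of_nonneg (by linarith),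
      enorm2_sq, enorm2_sq, dotProduct_smul, smul_dotProduct]
    simp only [smul_eq_mul]
    field_simp
  refine ⟨hfeas, hval, (IsLeast.csInf_eq ⟨?_, ?_⟩).symm⟩
  · exact ⟨M, θ, hfeas, hval.symm⟩
  rintro _ ⟨M', θ', hfeas', rfl⟩
  exact effPenalty_le_specPenalty_add_sq hω0 hω1 M' θ' (enorm2_nonneg βh) (hmin _ hfeas')
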